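/- Each step of the selection sort algorithm on reduced words produces a word related to the previous one by <_1; hence the algorithm produces a chain α = β^0 <_1 β^1 <_1 … <_1 β^k = β in the directed-braid poset, terminating at a natural basic word β of ω. -/

import Mathlib

/-- The adjacent transposition `sᵢ = (i, i+1)` as a permutation of `ℕ`. -/
def sGen (i : ℕ) : Equiv.Perm ℕ := Equiv.swap i (i + 1)

/-- The permutation represented by a word. -/
def toPerm (w : List ℕ) : Equiv.Perm ℕ := (w.map sGen).prod

/-- A word is reduced (of minimal length among words representing the same permutation). -/
def IsReducedWord (w : List ℕ) : Prop := ∀ v : List ℕ, toPerm v = toPerm w → w.length ≤ v.length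

/-- `w` is a reduced word for the permutation `ω`. -/
def IsReducedWordOf (w : List ℕ) (ω : Equiv.Perm ℕ) : Prop :=
  toPerm w = ω ∧ ∀ v : List ℕ, toPerm v = ω → w.length ≤ v.length

/-- The relation `<₁`: `β` is obtained from `α` by swapping two adjacent letters
`x, y` with `y ≥ x + 2` (the smaller letter moves right). -/
def Rel1 (α β : List ℕ) : Prop :=
  ∃ (p q : List ℕ) (x y : ℕ), x + 2 ≤ y ∧
    α = p ++ x :: y :: q ∧ β = p ++ y :: x :: q

/-- Lexicographic order (non-strict) on words. -/
def LexLe (α β : List ℕ) : Prop := α = β ∨ List.Lex (· < ·) α β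

/-- A tower word: a nonempty increasing run of consecutive integers. -/
def IsTowerWord (a : List ℕ) : Prop := a ≠ [] ∧ a.Chain' (fun x y => y = x + 1)

/-- First letter of a tower word. -/
def inn (a : List ℕ) : ℕ := a.headI

/-- Last letter of a tower word. -/
def fin' (a : List ℕ) : ℕ := a.getLastD 0

/-- `L` is the tower decomposition of `w`: a factorization into maximal tower words. -/
def IsTowerDecomp (w : List ℕ) (L : List (List ℕ)) : Prop :=
  L.flatten = w ∧ (∀ a ∈ L, IsTowerWord a) ∧
    L.Chain' (fun a b => inn b ≠ fin' a + 1)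

/-- The relation `<₂`: a directed long-braid move of a tower word past its left neighbour. -/
def Rel2 (α β : List ℕ) : Prop :=
  ∃ (A B : List (List ℕ)) (a b b1 b2 : List ℕ),
    IsTowerDecomp α (A ++ a :: b :: B) ∧
    inn a ≤ inn b ∧ inn b < fin' b ∧ fin' b < fin' a ∧
    IsTowerWord b1 ∧ (b2 = [] ∨ IsTowerWord b2) ∧ b1 ++ b2 = b ∧
    β = A.flatten ++ (b1.map (· + 1)) ++ a ++ b2 ++ B.flatten

/-- The directed-braid order: reflexive-transitive closure of `<₁ ∪ <₂`. -/
def DBraid : List ℕ → List ℕ → Prop :=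
  Relation.ReflTransGen (fun α β => Rel1 α β ∨ Rel2 α β)

/-- The natural word of `ω`: the reduced word whose tower decomposition has
strictly decreasing initial letters. -/
def IsNaturalWordOf (η : List ℕ) (ω : Equiv.Perm ℕ) : Prop :=
  IsReducedWordOf η ω ∧ ∃ L, IsTowerDecomp η L ∧ L.Chain' (fun a b => inn b < inn a)

/-- A natural basic word of `ω`: a reduced word whose tower decomposition satisfies
`fin(aᵢ) > in(aᵢ₊₁)` for all `i`. -/
def IsNaturalBasicOf (β : List ℕ) (ω : Equiv.Perm ℕ) : Prop :=
  IsReducedWordOf β ω ∧ ∃ L, IsTowerDecomp β L ∧ L.Chain' (fun a b => inn b < fin' a)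

/-- One step of the track of a letter `b` through a tower word `a`. -/
def trackStep (a : List ℕ) (b : ℕ) : Option ℕ :=
  if inn a < b ∧ b ≤ fin' a then some (b - 1)
  else if b + 2 ≤ inn a ∨ fin' a + 2 ≤ b then some b
  else none

/-- The track sequence of `b` through a list of tower words. -/
def trackSeq : ℕ → List (List ℕ) → List ℕ
  | b, [] => [b]
  | b, a :: rest =>
    match trackStep a b with
    | none => [b]
    | some b' => b :: trackSeq b' rest

/-- The tower decomposition of a word, as a function. -/
def towerDecomp : List ℕ → List (List ℕ)
  | [] => []
  | x :: xs =>
    match towerDecomp xs with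
    | [] => [[x]]
    | t :: ts => if t.headI = x + 1 then (x :: t) :: ts else [x] :: t :: ts

/-
In the tower decomposition of a reduced word, two adjacent towers `a b` always satisfy
`in b ≠ fin a + 1` (maximality) and `in b ≠ fin a` (a repeated letter would cancel). So if
the word is not natural basic, some junction has `fin a + 2 ≤ in b`, and swapping these two
letters is a `<₁`-step to another reduced word of `ω`. Each such step lowers `∑ i * wᵢ`, so
the process stops, and it can only stop at a natural basic word.
-/

theorem Relation.exists_reflTransGen_of_measure {α : Type*} {r : α → α → Prop}
    {P Q : α → Prop} (f : α → ℕ)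
    (hstep : ∀ a, P a → ¬ Q a → ∃ b, r a b ∧ P b ∧ f b < f a) (a : α) (ha : P a) :
    ∃ b, Q b ∧ Relation.ReflTransGen r a b := by
  induction a using (measure f).wf.induction with
  | _ a ih =>
    by_cases hQ : Q a
    · exact ⟨a, hQ, .refl⟩
    · obtain ⟨b, hab, hb, hfb⟩ := hstep a ha hQ
      obtain ⟨c, hc, hbc⟩ := ih b hfb hb
      exact ⟨c, hc, .head hab hbc⟩

@[simp]
theorem toPerm_cons (x : ℕ) (w : List ℕ) : toPerm (x :: w) = sGen x * toPerm w := by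
  simp [toPerm]

@[simp]
theorem toPerm_append (v w : List ℕ) : toPerm (v ++ w) = toPerm v * toPerm w := by
  simp [toPerm]

theorem sGen_mul_self (x : ℕ) : sGen x * sGen x = 1 := Equiv.swap_mul_self _ _

theorem sGen_mul_comm {x y : ℕ} (h : x + 2 ≤ y) : sGen x * sGen y = sGen y * sGen x := by
  ext n
  simp only [sGen, Equiv.Perm.mul_apply, Equiv.swap_apply_def]
  split_ifs <;> omega

theorem toPerm_append_cons_cons (p q : List ℕ) (x y : ℕ) :
    toPerm (p ++ x :: y :: q) = toPerm p * (sGen x * sGen y) * toPerm q := by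
  simp [mul_assoc]

theorem toPerm_append_cons_cons_self (p q : List ℕ) (x : ℕ) :
    toPerm (p ++ x :: x :: q) = toPerm (p ++ q) := by
  rw [toPerm_append_cons_cons, sGen_mul_self, mul_one, toPerm_append]

theorem IsReducedWordOf.ne_of_eq_append {w : List ℕ} {ω : Equiv.Perm ℕ}
    (hw : IsReducedWordOf w ω) {p q : List ℕ} {x y : ℕ} (h : w = p ++ x :: y :: q) :
    x ≠ y := by
  rintro rfl
  have hlen := hw.2 (p ++ q) (by rw [← toPerm_append_cons_cons_self, ← h, hw.1])
  simp [h] at hlen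

/-- `indexWeightedSum w = ∑ i, i * w[i]`. -/
def indexWeightedSum : List ℕ → ℕ
  | [] => 0
  | _ :: w => w.sum + indexWeightedSum w

theorem indexWeightedSum_append_cons_cons (p q : List ℕ) (x y : ℕ) :
    indexWeightedSum (p ++ x :: y :: q) + x = indexWeightedSum (p ++ y :: x :: q) + y := by
  induction p with
  | nil => simp only [List.nil_append, indexWeightedSum, List.sum_cons]; omega
  | cons a p ih =>
    simp only [List.cons_append, indexWeightedSum, List.sum_append, List.sum_cons]
    omega

namespace Rel1

variable {v w : List ℕ}

theorem toPerm_eq (h : Rel1 v w) : toPerm w = toPerm v := by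
  obtain ⟨p, q, x, y, hxy, rfl, rfl⟩ := h
  rw [toPerm_append_cons_cons, toPerm_append_cons_cons, sGen_mul_comm hxy]

theorem length_eq (h : Rel1 v w) : w.length = v.length := by
  obtain ⟨p, q, x, y, -, rfl, rfl⟩ := h
  simp

theorem isReducedWordOf {ω : Equiv.Perm ℕ} (h : Rel1 v w) (hv : IsReducedWordOf v ω) :
    IsReducedWordOf w ω :=
  ⟨h.toPerm_eq.trans hv.1, fun u hu => h.length_eq ▸ hv.2 u hu⟩

theorem indexWeightedSum_lt (h : Rel1 v w) : indexWeightedSum w < indexWeightedSum v := by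
  obtain ⟨p, q, x, y, hxy, rfl, rfl⟩ := h
  have := indexWeightedSum_append_cons_cons p q x y
  omega

end Rel1

theorem isTowerDecomp_iff {w : List ℕ} {L : List (List ℕ)} :
    IsTowerDecomp w L ↔
      L.flatten = w ∧ (∀ a ∈ L, IsTowerWord a) ∧
        L.IsChain (fun a b => inn b ≠ fin' a + 1) :=
  Iff.rfl

theorem isTowerWord_singleton (x : ℕ) : IsTowerWord [x] :=
  ⟨List.cons_ne_nil _ _, .singleton x⟩

theorem IsTowerWord.cons {t : List ℕ} (ht : IsTowerWord t) {x : ℕ} (hx : inn t = x + 1) :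
    IsTowerWord (x :: t) := by
  obtain ⟨hne, hchain⟩ := ht
  obtain ⟨y, t, rfl⟩ := List.exists_cons_of_ne_nil hne
  exact ⟨List.cons_ne_nil _ _, .cons_cons hx hchain⟩

theorem fin'_cons {t : List ℕ} (ht : t ≠ []) (x : ℕ) : fin' (x :: t) = fin' t := by
  obtain ⟨y, t, rfl⟩ := List.exists_cons_of_ne_nil ht
  simp [fin']

theorem isTowerDecomp_towerDecomp (w : List ℕ) : IsTowerDecomp w (towerDecomp w) := by
  induction w with
  | nil => exact ⟨rfl, by simp [towerDecomp], .nil⟩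
  | cons x w ih =>
    obtain ⟨hflat, htower, hmax⟩ := isTowerDecomp_iff.1 ih
    rw [isTowerDecomp_iff]
    rcases hd : towerDecomp w with _ | ⟨t, ts⟩ <;> rw [hd] at hflat htower hmax
    · simp [towerDecomp, ← hflat, isTowerWord_singleton]
    have ht : IsTowerWord t := htower t List.mem_cons_self
    simp only [towerDecomp, hd]
    split_ifs with hxt
    · refine ⟨by simp [← hflat], ?_, ?_⟩
      · simpa [ht.cons hxt] using fun a ha => htower a (List.mem_cons_of_mem _ ha)
      · cases ts with
        | nil => exact .singleton _
        | cons s ss =>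
          rw [List.isChain_cons_cons] at hmax ⊢
          exact ⟨fin'_cons ht.1 x ▸ hmax.1, hmax.2⟩
    · refine ⟨by simp [← hflat], ?_, .cons_cons (by simpa [inn, fin'] using hxt) hmax⟩
      simpa [isTowerWord_singleton] using htower

theorem flatten_append_cons_cons {A B : List (List ℕ)} {a b : List ℕ} (ha : a ≠ [])
    (hb : b ≠ []) :
    (A ++ a :: b :: B).flatten =
      (A.flatten ++ a.dropLast) ++ fin' a :: inn b :: (b.tail ++ B.flatten) := by
  obtain ⟨y, b, rfl⟩ := List.exists_cons_of_ne_nil hb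
  rcases List.eq_nil_or_concat' a with rfl | ⟨a, x, rfl⟩
  · exact absurd rfl ha
  simp [inn, fin']

theorem exists_rel1_of_not_isChain {w : List ℕ} {ω : Equiv.Perm ℕ} (hw : IsReducedWordOf w ω)
    (h : ¬ (towerDecomp w).IsChain (fun a b => inn b < fin' a)) : ∃ w', Rel1 w w' := by
  obtain ⟨hflat, htower, hmax⟩ := isTowerDecomp_iff.1 (isTowerDecomp_towerDecomp w)
  simp only [List.isChain_iff_forall_rel_of_append_cons_cons, not_forall, not_lt] at h
  obtain ⟨a, b, A, B, hL, hab⟩ := h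
  have hnext : inn b ≠ fin' a + 1 := List.isChain_iff_forall_rel_of_append_cons_cons.1 hmax hL
  have hw' : w = (A.flatten ++ a.dropLast) ++ fin' a :: inn b :: (b.tail ++ B.flatten) := by
    rw [← hflat, hL]
    exact flatten_append_cons_cons (htower a (by simp [hL])).1 (htower b (by simp [hL])).1
  have hsame : fin' a ≠ inn b := hw.ne_of_eq_append hw'
  exact ⟨_, _, _, _, _, by omega, hw', rfl⟩

/-- from any reduced word of ω, the selection sort algorithm yields a
chain of `<₁`-steps terminating at a natural basic word. -/
theorem selection_sort_chain (ω : Equiv.Perm ℕ) (α : List ℕ)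
    (hα : IsReducedWordOf α ω) :
    ∃ β : List ℕ, IsNaturalBasicOf β ω ∧ Relation.ReflTransGen Rel1 α β := by
  refine Relation.exists_reflTransGen_of_measure (P := (IsReducedWordOf · ω)) indexWeightedSum
    (fun w hw hnb => ?_) α hα
  have hchain : ¬ (towerDecomp w).IsChain (fun a b => inn b < fin' a) :=
    fun h => hnb ⟨hw, _, isTowerDecomp_towerDecomp w, h⟩
  obtain ⟨w', hstep⟩ := exists_rel1_of_not_isChain hw hchain
  exact ⟨w', hstep, hstep.isReducedWordOf hw, hstep.indexWeightedSum_lt⟩
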